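/- (Completeness of ι.) For all λ$-terms e, e', if ι(e) =Λ$ ι(e') then e =λ$ e'; and for all Λ$-terms M, M', if M =Λ$ M' then π(M) =λ$ π(M'). -/
import Mathlib


namespace Shift0

/-! ### The calculus Λ$ (de Bruijn representation) -/

/-- Terms of Λ$: variables, λ-abstractions, freeze `$(M)`, application, thaw `S₀(M)`. -/
inductive Tm : Type
  | var : Nat → Tm
  | lam : Tm → Tm
  | freeze : Tm → Tm
  | app : Tm → Tm → Tm
  | thaw : Tm → Tm
  deriving DecidableEq

namespace Tm

/-- Values of Λ$: variables, abstractions and frozen terms. -/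
inductive IsValue : Tm → Prop
  | var (n : Nat) : IsValue (.var n)
  | lam (M : Tm) : IsValue (.lam M)
  | freeze (M : Tm) : IsValue (.freeze M)

/-- Nonvalues of Λ$: applications and thawed terms. -/
inductive IsNonvalue : Tm → Prop
  | app (M N : Tm) : IsNonvalue (.app M N)
  | thaw (M : Tm) : IsNonvalue (.thaw M)

/-- Boolean value test. -/
def isVal : Tm → Bool
  | .var _ => true
  | .lam _ => true
  | .freeze _ => true
  | .app _ _ => false
  | .thaw _ => false

/-- Lift (shift) the free de Bruijn variables `≥ d` up by one. -/
def lift (d : Nat) : Tm → Tm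
  | .var n => if n < d then .var n else .var (n+1)
  | .lam M => .lam (lift (d+1) M)
  | .freeze M => .freeze (lift d M)
  | .app M N => .app (lift d M) (lift d N)
  | .thaw M => .thaw (lift d M)

/-- Capture-avoiding substitution `M[N/x]` (for the de Bruijn variable `x`);
the variables above `x` are shifted down by one. -/
def subst : Tm → Nat → Tm → Tm
  | .var n, x, N => if n = x then N else if n < x then .var n else .var (n-1)
  | .lam M, x, N => .lam (subst M (x+1) (N.lift 0))
  | .freeze M, x, N => .freeze (subst M x N)
  | .app M L, x, N => .app (subst M x N) (subst L x N)
  | .thaw M, x, N => .thaw (subst M x N)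

/-- `M $ N` is sugar for `$(N) M`. -/
def dol (M N : Tm) : Tm := .app (.freeze N) M

/-- `let x = M in N` is sugar for `S₀k.((λx.(k $ N)) $ M)`;
here `N` has the let-bound variable as de Bruijn index `0`. -/
def letIn (M N : Tm) : Tm :=
  .thaw (.lam (dol (.lam (dol (.var 1) (N.lift 1))) (M.lift 0)))

end Tm

/-- Bindable contexts `J ::= [] M | V [] | S₀([])`. -/
inductive JCtx : Type
  | appL : Tm → JCtx
  | appR : Tm → JCtx
  | thaw : JCtx

namespace JCtx

/-- Well-formedness: in `V []` the term `V` must be a value. -/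
def Wf : JCtx → Prop
  | .appL _ => True
  | .appR V => V.IsValue
  | .thaw => True

/-- Plugging a term into a bindable context. -/
def plug : JCtx → Tm → Tm
  | .appL N, M => .app M N
  | .appR V, M => .app V M
  | .thaw, M => .thaw M

/-- Lift the free variables `≥ d` of a bindable context. -/
def lift (d : Nat) : JCtx → JCtx
  | .appL N => .appL (N.lift d)
  | .appR V => .appR (V.lift d)
  | .thaw => .thaw

end JCtx

/-- Pure contexts `K ::= [] | J[K]`, represented as a list of bindable
contexts (head outermost). -/
abbrev KCtx : Type := List JCtx

/-- Plugging a term into a pure context. -/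
def KCtx.plug : KCtx → Tm → Tm
  | [], M => M
  | (J :: K), M => J.plug (KCtx.plug K M)

/-- Well-formedness of a pure context. -/
def KCtx.Wf (K : KCtx) : Prop := ∀ J ∈ K, JCtx.Wf J

/-- Lift the free variables `≥ d` of a pure context. -/
def KCtx.lift (d : Nat) (K : KCtx) : KCtx := K.map (JCtx.lift d)

namespace Tm

/-- The basic contractions of Λ$. -/
inductive Contr : Tm → Tm → Prop
  | betav (M V : Tm) : V.IsValue → Contr (.app (.lam M) V) (M.subst 0 V)
  | etav (V : Tm) : V.IsValue → Contr (.lam (.app (V.lift 0) (.var 0))) V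
  | dolv (V : Tm) : V.IsValue → Contr (.freeze V) (.lam (.app (.var 0) (V.lift 0)))
  | dolsh (V : Tm) : V.IsValue → Contr (.freeze (.thaw V)) V
  | shdol (M : Tm) : Contr (.thaw (.freeze M)) M
  | pure (V : Tm) : V.IsValue → Contr (.thaw (.lam (.app (.var 0) (V.lift 0)))) V
  | bind (J : JCtx) (P : Tm) : J.Wf → P.IsNonvalue →
      Contr (J.plug P) (letIn P ((J.lift 0).plug (.var 0)))

/-- One-step reduction of Λ$: closure of the contractions under arbitrary
contexts (including under binders). -/
inductive Step : Tm → Tm → Prop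
  | contr {M N : Tm} : Contr M N → Step M N
  | lam {M N : Tm} : Step M N → Step (.lam M) (.lam N)
  | freeze {M N : Tm} : Step M N → Step (.freeze M) (.freeze N)
  | appL {M N L : Tm} : Step M N → Step (.app M L) (.app N L)
  | appR {M N L : Tm} : Step M N → Step (.app L M) (.app L N)
  | thaw {M N : Tm} : Step M N → Step (.thaw M) (.thaw N)

/-- Multi-step reduction `↠Λ$`. -/
def Steps : Tm → Tm → Prop := Relation.ReflTransGen Step

/-- Convertibility `=Λ$`: the equivalence generated by reduction. -/
def Equiv : Tm → Tm → Prop := Relation.EqvGen Step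

end Tm

/-! ### The pure λ-calculus with βη -/

/-- Terms of the pure λ-calculus. -/
inductive Lam : Type
  | var : Nat → Lam
  | lam : Lam → Lam
  | app : Lam → Lam → Lam
  deriving DecidableEq

namespace Lam

/-- Lift the free de Bruijn variables `≥ d` up by one. -/
def lift (d : Nat) : Lam → Lam
  | .var n => if n < d then .var n else .var (n+1)
  | .lam M => .lam (lift (d+1) M)
  | .app M N => .app (lift d M) (lift d N)

/-- Capture-avoiding substitution `M[N/x]`. -/
def subst : Lam → Nat → Lam → Lam
  | .var n, x, N => if n = x then N else if n < x then .var n else .var (n-1)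
  | .lam M, x, N => .lam (subst M (x+1) (N.lift 0))
  | .app M L, x, N => .app (subst M x N) (subst L x N)

/-- β and η contractions. -/
inductive Contr : Lam → Lam → Prop
  | beta (M N : Lam) : Contr (.app (.lam M) N) (M.subst 0 N)
  | eta (M : Lam) : Contr (.lam (.app (M.lift 0) (.var 0))) M

/-- One-step βη-reduction, closed under arbitrary contexts. -/
inductive Step : Lam → Lam → Prop
  | contr {M N : Lam} : Contr M N → Step M N
  | lam {M N : Lam} : Step M N → Step (.lam M) (.lam N)
  | appL {M N L : Lam} : Step M N → Step (.app M L) (.app N L)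
  | appR {M N L : Lam} : Step M N → Step (.app L M) (.app L N)

/-- Multi-step βη-reduction `↠λ`. -/
def Steps : Lam → Lam → Prop := Relation.ReflTransGen Step

/-- βη-convertibility `=λ`. -/
def Equiv : Lam → Lam → Prop := Relation.EqvGen Step

end Lam

end Shift0

namespace Shift0

/-! ### The CPS translation `* : Λ$ → λ` and its value part `†` -/

mutual

/-- The CPS translation `M*`.  It is the full unfolding of the equations
`V* = λk.k V†`, `J[P]* = λk.P* (λx.(J[x]* k))`, `(V W)* = V† W†` and
`(S₀(V))* = V†`. -/
def cps : Tm → Lam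
  | .var n => .lam (.app (.var 0) (.var (n+1)))
  | .lam M => .lam (.app (.var 0) ((Lam.lam (cps M)).lift 0))
  | .freeze M => .lam (.app (.var 0) ((cps M).lift 0))
  | .app M N =>
      if M.isVal then
        if N.isVal then .app (cpsV M) (cpsV N)
        else
          .lam (.app ((cps N).lift 0)
            (.lam (.app (.app (((cpsV M).lift 0).lift 0) (.var 0)) (.var 1))))
      else
        if N.isVal then
          .lam (.app ((cps M).lift 0)
            (.lam (.app (.app (.var 0) (((cpsV N).lift 0).lift 0)) (.var 1))))
        else
          .lam (.app ((cps M).lift 0)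
            (.lam (.app
              (.lam (.app ((((cps N).lift 0).lift 0).lift 0)
                (.lam (.app (.app (.var 2) (.var 0)) (.var 1)))))
              (.var 1))))
  | .thaw M =>
      if M.isVal then cpsV M
      else .lam (.app ((cps M).lift 0) (.lam (.app (.var 0) (.var 1))))

/-- The value part `V†` of the CPS translation (junk on nonvalues). -/
def cpsV : Tm → Lam
  | .var n => .var n
  | .lam M => .lam (cps M)
  | .freeze M => cps M
  | .app _ _ => .var 0
  | .thaw _ => .var 0

end

/-! ### The direct-style translation `# : λ → Λ$` and its auxiliary `♮` -/

namespace Lam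

/-- Does the de Bruijn variable `x` occur free in the term? -/
def hasVar (x : Nat) : Lam → Bool
  | .var n => n = x
  | .lam M => hasVar (x+1) M
  | .app M N => hasVar x M || hasVar x N

/-- Shift the free de Bruijn variables `> d` down by one
(inverse of `lift d` on terms not containing `d` free). -/
def lower (d : Nat) : Lam → Lam
  | .var n => if d < n then .var (n-1) else .var n
  | .lam M => .lam (lower (d+1) M)
  | .app M N => .app (lower d M) (lower d N)

/-- Size of a λ-term. -/
def size : Lam → Nat
  | .var _ => 1
  | .lam M => size M + 1
  | .app M N => size M + size N + 1

theorem size_lower (d : Nat) (M : Lam) : (lower d M).size = M.size := by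
  induction M generalizing d with
  | var n => simp only [lower]; split <;> rfl
  | lam M ih => simp [lower, size, ih]
  | app M N ihM ihN => simp [lower, size, ihM, ihN]

end Lam

mutual

/-- The direct-style translation `M#`; the case `(λx.x N)# = N♮` (with
`x ∉ FV(N)`) is rendered by checking that de Bruijn variable `0` does not
occur in `N` and lowering the remaining variables. -/
def ds : Lam → Tm
  | .var n => .thaw (.var n)
  | .app M N => .app (nat M) (nat N)
  | .lam (.app (.var 0) N) =>
      if N.hasVar 0 then .thaw (.lam (.app (.var 0) (nat N)))
      else nat (N.lower 0)
  | .lam M => .thaw (.lam (ds M))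
termination_by M => M.size
decreasing_by all_goals simp [Lam.size, Lam.size_lower] <;> omega

/-- The auxiliary direct-style translation `M♮`. -/
def nat : Lam → Tm
  | .var n => .var n
  | .lam M => .lam (ds M)
  | .app M N => .freeze (.app (nat M) (nat N))
termination_by M => M.size
decreasing_by all_goals simp [Lam.size, Lam.size_lower] <;> omega

end

end Shift0

namespace Shift0

/-! ### Materzok's calculus λ$ -/

/-- Terms of λ$: variables, abstractions, applications, `S₀x.e`
(the body is under a binder) and `e $ e'`. -/
inductive LTm : Type
  | var : Nat → LTm
  | lam : LTm → LTm
  | app : LTm → LTm → LTm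
  | shift : LTm → LTm
  | dollar : LTm → LTm → LTm
  deriving DecidableEq

namespace LTm

/-- Values of λ$: variables and abstractions. -/
inductive IsValue : LTm → Prop
  | var (n : Nat) : IsValue (.var n)
  | lam (e : LTm) : IsValue (.lam e)

/-- Lift the free de Bruijn variables `≥ d` up by one. -/
def lift (d : Nat) : LTm → LTm
  | .var n => if n < d then .var n else .var (n+1)
  | .lam e => .lam (lift (d+1) e)
  | .app e f => .app (lift d e) (lift d f)
  | .shift e => .shift (lift (d+1) e)
  | .dollar e f => .dollar (lift d e) (lift d f)

/-- Capture-avoiding substitution `e[v/x]`. -/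
def subst : LTm → Nat → LTm → LTm
  | .var n, x, N => if n = x then N else if n < x then .var n else .var (n-1)
  | .lam e, x, N => .lam (subst e (x+1) (N.lift 0))
  | .app e f, x, N => .app (subst e x N) (subst f x N)
  | .shift e, x, N => .shift (subst e (x+1) (N.lift 0))
  | .dollar e f, x, N => .dollar (subst e x N) (subst f x N)

end LTm

/-- Pure contexts of λ$: `E ::= [] | E e | v E | E $ e`. -/
inductive ECtx : Type
  | hole : ECtx
  | appL : ECtx → LTm → ECtx
  | appR : LTm → ECtx → ECtx
  | dolL : ECtx → LTm → ECtx

namespace ECtx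

/-- Well-formedness: in `v E` the term `v` must be a value. -/
def Wf : ECtx → Prop
  | .hole => True
  | .appL E _ => E.Wf
  | .appR v E => v.IsValue ∧ E.Wf
  | .dolL E _ => E.Wf

/-- Plugging a term into a pure context of λ$. -/
def plug : ECtx → LTm → LTm
  | .hole, e => e
  | .appL E f, e => .app (E.plug e) f
  | .appR v E, e => .app v (E.plug e)
  | .dolL E f, e => .dollar (E.plug e) f

/-- Lift the free variables `≥ d` of a pure context. -/
def lift (d : Nat) : ECtx → ECtx
  | .hole => .hole
  | .appL E f => .appL (E.lift d) (f.lift d)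
  | .appR v E => .appR (v.lift d) (E.lift d)
  | .dolL E f => .dolL (E.lift d) (f.lift d)

end ECtx

namespace LTm

/-- The axioms of λ$. -/
inductive Ax : LTm → LTm → Prop
  | betav (e v : LTm) : v.IsValue → Ax (.app (.lam e) v) (e.subst 0 v)
  | etav (v : LTm) : v.IsValue → Ax (.lam (.app (v.lift 0) (.var 0))) v
  | dolv (v w : LTm) : v.IsValue → w.IsValue → Ax (.dollar v w) (.app v w)
  | dolE (v : LTm) (E : ECtx) (e : LTm) : v.IsValue → E.Wf →
      Ax (.dollar v (E.plug e))
         (.dollar (.lam (.dollar (v.lift 0) ((E.lift 0).plug (.var 0)))) e)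
  | betad (v e : LTm) : v.IsValue → Ax (.dollar v (.shift e)) (e.subst 0 v)
  | etad (e : LTm) : Ax (.shift (.dollar (.var 0) (e.lift 0))) e

/-- The axioms applied in an arbitrary context. -/
inductive AStep : LTm → LTm → Prop
  | ax {e f : LTm} : Ax e f → AStep e f
  | lam {e f : LTm} : AStep e f → AStep (.lam e) (.lam f)
  | appL {e f g : LTm} : AStep e f → AStep (.app e g) (.app f g)
  | appR {e f g : LTm} : AStep e f → AStep (.app g e) (.app g f)
  | shift {e f : LTm} : AStep e f → AStep (.shift e) (.shift f)
  | dolL {e f g : LTm} : AStep e f → AStep (.dollar e g) (.dollar f g)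
  | dolR {e f g : LTm} : AStep e f → AStep (.dollar g e) (.dollar g f)

/-- The equational theory `=λ$` generated by the axioms. -/
def Equiv : LTm → LTm → Prop := Relation.EqvGen AStep

end LTm

/-- The embedding `ι : λ$ → Λ$`. -/
def iota : LTm → Tm
  | .var n => .var n
  | .lam e => .lam (iota e)
  | .app e f => .app (iota e) (iota f)
  | .shift e => .thaw (.lam (iota e))
  | .dollar e f => .app (.freeze (iota f)) (iota e)

/-- The translation `π : Λ$ → λ$`. -/
def pi : Tm → LTm
  | .var n => .var n
  | .lam M => .lam (pi M)
  | .freeze M => .lam (.dollar (.var 0) ((pi M).lift 0))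
  | .app M N => .app (pi M) (pi N)
  | .thaw M => .app (.lam (.shift (.app (.var 1) (.var 0)))) (pi M)

/-- Materzok's CPS translation `⟦·⟧ : λ$ → λ` (with the value translation
`⟪x⟫ = x`, `⟪λx.e⟫ = λx.⟦e⟧` inlined). -/
def mcps : LTm → Lam
  | .var n => .lam (.app (.var 0) (.var (n+1)))
  | .lam e => .lam (.app (.var 0) ((Lam.lam (mcps e)).lift 0))
  | .app e f => .lam (.app ((mcps e).lift 0)
      (.lam (.app (((mcps f).lift 0).lift 0)
        (.lam (.app (.app (.var 1) (.var 0)) (.var 2))))))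
  | .shift e => .lam (mcps e)
  | .dollar e f => .lam (.app ((mcps e).lift 0)
      (.lam (.app (.app (((mcps f).lift 0).lift 0) (.var 0)) (.var 1))))

end Shift0

namespace Shift0

namespace LTm

/-! #### de Bruijn lemmas for λ$ -/

theorem lift_lift : ∀ (e : LTm) (i j : Nat), i ≤ j →
    (e.lift j).lift i = (e.lift i).lift (j+1)
  | .var n, i, j, h => by
      simp only [lift]
      split <;> split <;> simp only [lift] <;> split <;> split <;>
        first | rfl | (exfalso; omega) | (simp only [LTm.var.injEq]; omega)
  | .lam e, i, j, h => by
      simp only [lift, lift_lift e (i+1) (j+1) (by omega)]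
  | .shift e, i, j, h => by
      simp only [lift, lift_lift e (i+1) (j+1) (by omega)]
  | .app e f, i, j, h => by
      simp only [lift, lift_lift e i j h, lift_lift f i j h]
  | .dollar e f, i, j, h => by
      simp only [lift, lift_lift e i j h, lift_lift f i j h]

theorem subst_lift : ∀ (e : LTm) (d : Nat) (v : LTm), (e.lift d).subst d v = e
  | .var n, d, v => by
      simp only [lift, subst]
      split_ifs <;> (try simp only [lift, subst]) <;> (try split_ifs) <;>
        (try simp only [lift, subst]) <;> (try split_ifs) <;>
        first | rfl | (exfalso; omega) | (simp only [LTm.var.injEq]; omega) | simp_all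
  | .lam e, d, v => by simp only [lift, subst, subst_lift e (d+1) (v.lift 0)]
  | .shift e, d, v => by simp only [lift, subst, subst_lift e (d+1) (v.lift 0)]
  | .app e f, d, v => by simp only [lift, subst, subst_lift e d v, subst_lift f d v]
  | .dollar e f, d, v => by simp only [lift, subst, subst_lift e d v, subst_lift f d v]

theorem subst_lift_var : ∀ (e : LTm) (d : Nat),
    (e.lift (d+1)).subst d (.var d) = e
  | .var n, d => by
      simp only [lift, subst]
      split_ifs <;> (try simp only [lift, subst]) <;> (try split_ifs) <;>
        (try simp only [lift, subst]) <;> (try split_ifs) <;>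
        first | rfl | (exfalso; omega) | (simp only [LTm.var.injEq]; omega) | simp_all
  | .lam e, d => by
      simp only [lift, subst]
      rw [if_neg (Nat.not_lt_zero d), subst_lift_var e (d+1)]
  | .shift e, d => by
      simp only [lift, subst]
      rw [if_neg (Nat.not_lt_zero d), subst_lift_var e (d+1)]
  | .app e f, d => by simp only [lift, subst, subst_lift_var e d, subst_lift_var f d]
  | .dollar e f, d => by simp only [lift, subst, subst_lift_var e d, subst_lift_var f d]

theorem lift_subst_ge : ∀ (e v : LTm) (x d : Nat), x ≤ d →
    (e.subst x v).lift d = (e.lift (d+1)).subst x (v.lift d)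
  | .var n, v, x, d, h => by
      simp only [subst, lift]
      split_ifs <;> (try simp only [lift, subst]) <;> (try split_ifs) <;>
        (try simp only [lift, subst]) <;> (try split_ifs) <;>
        first | rfl | (exfalso; omega) | (simp only [LTm.var.injEq]; omega) | simp_all
  | .lam e, v, x, d, h => by
      simp only [subst, lift, lift_subst_ge e (v.lift 0) (x+1) (d+1) (by omega),
        lift_lift v 0 d (by omega)]
  | .shift e, v, x, d, h => by
      simp only [subst, lift, lift_subst_ge e (v.lift 0) (x+1) (d+1) (by omega),
        lift_lift v 0 d (by omega)]
  | .app e f, v, x, d, h => by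
      simp only [subst, lift, lift_subst_ge e v x d h, lift_subst_ge f v x d h]
  | .dollar e f, v, x, d, h => by
      simp only [subst, lift, lift_subst_ge e v x d h, lift_subst_ge f v x d h]

theorem lift_subst_le : ∀ (e v : LTm) (x d : Nat), d ≤ x →
    (e.subst x v).lift d = (e.lift d).subst (x+1) (v.lift d)
  | .var n, v, x, d, h => by
      simp only [subst, lift]
      split_ifs <;> (try simp only [lift, subst]) <;> (try split_ifs) <;>
        (try simp only [lift, subst]) <;> (try split_ifs) <;>
        first | rfl | (exfalso; omega) | (simp only [LTm.var.injEq]; omega) | simp_all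
  | .lam e, v, x, d, h => by
      simp only [subst, lift, lift_subst_le e (v.lift 0) (x+1) (d+1) (by omega),
        lift_lift v 0 d (by omega)]
  | .shift e, v, x, d, h => by
      simp only [subst, lift, lift_subst_le e (v.lift 0) (x+1) (d+1) (by omega),
        lift_lift v 0 d (by omega)]
  | .app e f, v, x, d, h => by
      simp only [subst, lift, lift_subst_le e v x d h, lift_subst_le f v x d h]
  | .dollar e f, v, x, d, h => by
      simp only [subst, lift, lift_subst_le e v x d h, lift_subst_le f v x d h]

theorem subst_lift₁ (e : LTm) (v : LTm) : (e.lift 0).subst 0 v = e :=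
  subst_lift e 0 v

theorem subst_lift_var₀ (e : LTm) : (e.lift 1).subst 0 (.var 0) = e :=
  subst_lift_var e 0

theorem lift_var0 (d : Nat) : (LTm.var 0).lift (d+1) = .var 0 := by
  simp only [lift]; rw [if_pos (by omega)]

theorem IsValue.lift {v : LTm} (h : v.IsValue) (d : Nat) : (v.lift d).IsValue := by
  cases h with
  | var n => simp only [LTm.lift]; split <;> exact .var _
  | lam e => exact .lam _

end LTm

namespace ECtx

theorem plug_lift : ∀ (E : ECtx) (e : LTm) (d : Nat),
    (E.plug e).lift d = (E.lift d).plug (e.lift d)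
  | .hole, e, d => rfl
  | .appL E f, e, d => by simp only [plug, lift, LTm.lift, plug_lift E e d]
  | .appR v E, e, d => by simp only [plug, lift, LTm.lift, plug_lift E e d]
  | .dolL E f, e, d => by simp only [plug, lift, LTm.lift, plug_lift E e d]

theorem Wf.lift : ∀ {E : ECtx}, E.Wf → ∀ (d : Nat), (E.lift d).Wf
  | .hole, _, _ => trivial
  | .appL E f, h, d => Wf.lift (E := E) h d
  | .appR v E, h, d => ⟨h.1.lift d, Wf.lift (E := E) h.2 d⟩
  | .dolL E f, h, d => Wf.lift (E := E) h d

theorem lift_lift : ∀ (E : ECtx) (d : Nat),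
    (E.lift 0).lift (d+1) = (E.lift d).lift 0
  | .hole, d => rfl
  | .appL E f, d => by
      simp only [lift, lift_lift E d]
      rw [← LTm.lift_lift f 0 d (by omega)]
  | .appR v E, d => by
      simp only [lift, lift_lift E d]
      rw [← LTm.lift_lift v 0 d (by omega)]
  | .dolL E f, d => by
      simp only [lift, lift_lift E d]
      rw [← LTm.lift_lift f 0 d (by omega)]

end ECtx

namespace LTm

theorem Ax.lift : ∀ {e f : LTm}, Ax e f → ∀ (d : Nat), Ax (e.lift d) (f.lift d)
  | _, _, .betav e v hv, d => by
      simp only [LTm.lift]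
      rw [lift_subst_ge e v 0 d (Nat.zero_le d)]
      exact .betav _ _ (hv.lift d)
  | _, _, .etav v hv, d => by
      simp only [LTm.lift]
      rw [if_pos (Nat.succ_pos d), ← lift_lift v 0 d (Nat.zero_le d)]
      exact .etav _ (hv.lift d)
  | _, _, .dolv v w hv hw, d => by
      simp only [LTm.lift]
      exact .dolv _ _ (hv.lift d) (hw.lift d)
  | _, _, .dolE v E e hv hE, d => by
      simp only [LTm.lift, ECtx.plug_lift]
      rw [if_pos (Nat.succ_pos d), ECtx.lift_lift E d,
        ← lift_lift v 0 d (Nat.zero_le d)]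
      exact .dolE _ _ _ (hv.lift d) (hE.lift d)
  | _, _, .betad v e hv, d => by
      simp only [LTm.lift]
      rw [lift_subst_ge e v 0 d (Nat.zero_le d)]
      exact .betad _ _ (hv.lift d)
  | _, _, .etad e, d => by
      simp only [LTm.lift]
      rw [if_pos (Nat.succ_pos d), ← lift_lift e 0 d (Nat.zero_le d)]
      exact .etad (e.lift d)

theorem AStep.lift {e f : LTm} (h : AStep e f) (d : Nat) :
    AStep (e.lift d) (f.lift d) := by
  induction h generalizing d with
  | ax h => exact .ax (h.lift d)
  | lam _ ih => exact .lam (ih (d+1))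
  | appL _ ih => exact .appL (ih d)
  | appR _ ih => exact .appR (ih d)
  | shift _ ih => exact .shift (ih (d+1))
  | dolL _ ih => exact .dolL (ih d)
  | dolR _ ih => exact .dolR (ih d)

/-! #### The equivalence of λ$ -/

theorem Equiv.rel {e f : LTm} (h : AStep e f) : Equiv e f := Relation.EqvGen.rel _ _ h

theorem Equiv.refl (e : LTm) : Equiv e e := Relation.EqvGen.refl e

theorem Equiv.symm {e f : LTm} (h : Equiv e f) : Equiv f e := Relation.EqvGen.symm _ _ h

theorem Equiv.trans {e f g : LTm} (h1 : Equiv e f) (h2 : Equiv f g) : Equiv e g :=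
  Relation.EqvGen.trans _ _ _ h1 h2

theorem Equiv.cong {F : LTm → LTm} (hF : ∀ a b, AStep a b → AStep (F a) (F b))
    {e f : LTm} (h : Equiv e f) : Equiv (F e) (F f) := by
  induction h with
  | rel a b hab => exact Equiv.rel (hF a b hab)
  | refl a => exact Equiv.refl _
  | symm a b _ ih => exact ih.symm
  | trans a b c _ _ ih1 ih2 => exact ih1.trans ih2

theorem Equiv.lamC {e f : LTm} (h : Equiv e f) : Equiv (.lam e) (.lam f) :=
  Equiv.cong (fun _ _ hs => .lam hs) h

theorem Equiv.shiftC {e f : LTm} (h : Equiv e f) : Equiv (.shift e) (.shift f) :=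
  Equiv.cong (fun _ _ hs => .shift hs) h

theorem Equiv.appLC {e f g : LTm} (h : Equiv e f) : Equiv (.app e g) (.app f g) :=
  Equiv.cong (fun _ _ hs => .appL hs) h

theorem Equiv.appRC {e f g : LTm} (h : Equiv e f) : Equiv (.app g e) (.app g f) :=
  Equiv.cong (fun _ _ hs => .appR hs) h

theorem Equiv.dolLC {e f g : LTm} (h : Equiv e f) : Equiv (.dollar e g) (.dollar f g) :=
  Equiv.cong (fun _ _ hs => .dolL hs) h

theorem Equiv.dolRC {e f g : LTm} (h : Equiv e f) : Equiv (.dollar g e) (.dollar g f) :=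
  Equiv.cong (fun _ _ hs => .dolR hs) h

theorem Equiv.appC {e e' f f' : LTm} (h1 : Equiv e e') (h2 : Equiv f f') :
    Equiv (.app e f) (.app e' f') := (h1.appLC).trans (h2.appRC)

theorem Equiv.dollarC {e e' f f' : LTm} (h1 : Equiv e e') (h2 : Equiv f f') :
    Equiv (.dollar e f) (.dollar e' f') := (h1.dolLC).trans (h2.dolRC)

theorem Equiv.liftE {e f : LTm} (h : Equiv e f) (d : Nat) :
    Equiv (e.lift d) (f.lift d) :=
  Equiv.cong (fun _ _ hs => hs.lift d) h

end LTm

/-! #### The thaw combinator -/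

/-- The combinator `λx.S₀k.x k` used by `π` on thawed terms. -/
def Om : LTm := .lam (.shift (.app (.var 1) (.var 0)))

theorem Om_isValue : Om.IsValue := .lam _

theorem Om_lift (d : Nat) : Om.lift d = Om := by
  simp only [Om, LTm.lift]
  rw [if_pos (by omega : (1:Nat) < d + 2), if_pos (by omega : (0:Nat) < d + 2)]

theorem Om_subst (x : Nat) (v : LTm) : Om.subst x v = Om := by
  simp only [Om, LTm.subst]
  rw [if_neg (by omega : ¬ (1:Nat) = x + 2), if_pos (by omega : (1:Nat) < x + 2),
    if_neg (by omega : ¬ (0:Nat) = x + 2), if_pos (by omega : (0:Nat) < x + 2)]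

theorem pi_thaw (M : Tm) : pi (.thaw M) = .app Om (pi M) := rfl

theorem om_beta (V : LTm) (hV : V.IsValue) :
    LTm.Ax (.app Om V) (.shift (.app (V.lift 0) (.var 0))) := by
  have h := LTm.Ax.betav (.shift (.app (.var 1) (.var 0))) V hV
  simpa [Om, LTm.subst] using h

end Shift0

namespace Shift0

open LTm (Equiv)

/-! #### Properties of `π` -/

theorem pi_isValue : ∀ {V : Tm}, V.IsValue → (pi V).IsValue
  | _, .var n => .var n
  | _, .lam M => .lam _
  | _, .freeze M => .lam _

theorem pi_lift : ∀ (M : Tm) (d : Nat), pi (M.lift d) = (pi M).lift d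
  | .var n, d => by
      simp only [Tm.lift]; split <;> simp [pi, LTm.lift, *]
  | .lam M, d => by
      simp only [Tm.lift, pi, LTm.lift, pi_lift M (d+1)]
  | .freeze M, d => by
      simp only [Tm.lift, pi, LTm.lift, pi_lift M d]
      rw [if_pos (Nat.succ_pos d), LTm.lift_lift (pi M) 0 d (Nat.zero_le d)]
  | .app M N, d => by
      simp only [Tm.lift, pi, LTm.lift, pi_lift M d, pi_lift N d]
  | .thaw M, d => by
      simp only [Tm.lift, pi_thaw, Om, LTm.lift, pi_lift M d]
      rw [if_pos (by omega : (1:Nat) < d+1+1), if_pos (by omega : (0:Nat) < d+1+1)]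

theorem pi_subst : ∀ (M : Tm) (x : Nat) (N : Tm),
    pi (M.subst x N) = (pi M).subst x (pi N)
  | .var n, x, N => by
      simp only [Tm.subst, pi, LTm.subst]
      split_ifs <;> simp_all [pi, LTm.subst]
  | .lam M, x, N => by
      simp only [Tm.subst, pi, LTm.subst, pi_subst M (x+1) (N.lift 0), pi_lift N 0]
  | .freeze M, x, N => by
      simp only [Tm.subst, pi, LTm.subst, pi_subst M x N]
      rw [if_neg (by omega : ¬ (0:Nat) = x + 1), if_pos (Nat.succ_pos x),
        LTm.lift_subst_le (pi M) (pi N) x 0 (Nat.zero_le x)]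
  | .app M L, x, N => by
      simp only [Tm.subst, pi, LTm.subst, pi_subst M x N, pi_subst L x N]
  | .thaw M, x, N => by
      simp only [Tm.subst, pi_thaw, Om, LTm.subst, pi_subst M x N]
      rw [if_neg (by omega : ¬(1:Nat) = x+1+1), if_pos (by omega : (1:Nat) < x+1+1),
        if_neg (by omega : ¬(0:Nat) = x+1+1), if_pos (by omega : (0:Nat) < x+1+1)]

theorem pi_letIn (M N : Tm) : pi (Tm.letIn M N) =
    .app Om (.lam (.app (.lam (.dollar (.var 0) (((pi M).lift 0).lift 0)))
      (.lam (.app (.lam (.dollar (.var 0) (((pi N).lift 1).lift 0))) (.var 1))))) := by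
  simp only [Tm.letIn, Tm.dol, pi_thaw, pi, pi_lift, Om]

/-! #### Key equational facts in λ$ -/

theorem dollar_pi (g h : LTm) :
    Equiv (.app (.lam (.dollar (.var 0) (g.lift 0))) h) (.dollar h g) := by
  set L : LTm := .app (.lam (.dollar (.var 0) (g.lift 0))) h with hL
  have hlift : L.lift 0 = .app (.lam (.dollar (.var 0) ((g.lift 0).lift 0))) (h.lift 0) := by
    simp only [hL, LTm.lift]
    rw [if_pos (Nat.succ_pos 0), ← LTm.lift_lift g 0 0 (Nat.le_refl 0)]
  set v' : LTm := .lam (.dollar (.var 0) ((g.lift 0).lift 0)) with hv'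
  -- left chain
  have l1 : Equiv L (.shift (.dollar (.var 0) (.app v' (h.lift 0)))) := by
    have h1 := (Equiv.rel (.ax (LTm.Ax.etad L))).symm
    rwa [hlift] at h1
  have l2 : LTm.Ax (.dollar (.var 0) (.app v' (h.lift 0)))
      (.dollar (.lam (.dollar (.var 1) (.app (v'.lift 0) (.var 0)))) (h.lift 0)) := by
    have h2 := LTm.Ax.dolE (.var 0) (.appR v' .hole) (h.lift 0) (.var 0) ⟨.lam _, trivial⟩
    simpa [ECtx.plug, ECtx.lift, LTm.lift] using h2
  have l3 : LTm.Ax (.app (v'.lift 0) (.var 0)) (.dollar (.var 0) ((g.lift 0).lift 0)) := by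
    have h3 := LTm.Ax.betav (.dollar (.var 0) (((g.lift 0).lift 0).lift 1)) (.var 0) (.var 0)
    simp only [LTm.subst, LTm.subst_lift_var₀] at h3
    simp only [hv', LTm.lift]
    rw [if_pos (Nat.succ_pos 0)]
    simpa using h3
  have lchain : Equiv L (.shift (.dollar (.lam (.dollar (.var 1)
      (.dollar (.var 0) ((g.lift 0).lift 0)))) (h.lift 0))) :=
    (l1.trans (Equiv.shiftC (Equiv.rel (.ax l2)))).trans
      (Equiv.shiftC (Equiv.dolLC (Equiv.lamC (Equiv.dolRC (Equiv.rel (.ax l3))))))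
  -- right chain
  have r1 : Equiv (.dollar h g) (.shift (.dollar (.var 0) (.dollar (h.lift 0) (g.lift 0)))) := by
    have h1 := (Equiv.rel (.ax (LTm.Ax.etad (.dollar h g)))).symm
    simpa [LTm.lift] using h1
  have r2 : LTm.Ax (.dollar (.var 0) (.dollar (h.lift 0) (g.lift 0)))
      (.dollar (.lam (.dollar (.var 1) (.dollar (.var 0) ((g.lift 0).lift 0)))) (h.lift 0)) := by
    have h2 := LTm.Ax.dolE (.var 0) (.dolL .hole (g.lift 0)) (h.lift 0) (.var 0) trivial
    simpa [ECtx.plug, ECtx.lift, LTm.lift] using h2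
  have rchain : Equiv (.dollar h g) (.shift (.dollar (.lam (.dollar (.var 1)
      (.dollar (.var 0) ((g.lift 0).lift 0)))) (h.lift 0))) :=
    r1.trans (Equiv.shiftC (Equiv.rel (.ax r2)))
  exact lchain.trans rchain.symm

theorem bind_core (t p q : LTm) (E : ECtx) (hE : E.Wf)
    (hq : (E.lift 0).plug (.var 0) = q.lift 1)
    (ht : t.lift 0 = E.plug (p.lift 0)) :
    Equiv t (.app Om (.lam (.app (.lam (.dollar (.var 0) ((p.lift 0).lift 0)))
      (.lam (.app (.lam (.dollar (.var 0) ((q.lift 1).lift 0))) (.var 1)))))) := by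
  set A : LTm := .lam (.app (.lam (.dollar (.var 0) ((q.lift 1).lift 0))) (.var 1)) with hA
  set B : LTm := .app (.lam (.dollar (.var 0) ((p.lift 0).lift 0))) A with hB
  -- right chain: reduce the translated let-expression
  have s1 : LTm.Ax (.app Om (.lam B)) (.shift (.app ((LTm.lam B).lift 0) (.var 0))) :=
    om_beta (.lam B) (.lam B)
  have s2 : LTm.Ax (.app ((LTm.lam B).lift 0) (.var 0)) B := by
    have h2 := LTm.Ax.betav (B.lift 1) (.var 0) (.var 0)
    rwa [LTm.subst_lift_var₀] at h2
  have s3 : LTm.Ax B (.dollar A (p.lift 0)) := by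
    have h3 := LTm.Ax.betav (.dollar (.var 0) ((p.lift 0).lift 0)) A (.lam _)
    simp only [LTm.subst, LTm.subst_lift₁] at h3
    simpa using h3
  have s4 : LTm.Ax (.app (.lam (.dollar (.var 0) ((q.lift 1).lift 0))) (.var 1))
      (.dollar (.var 1) (q.lift 1)) := by
    have h4 := LTm.Ax.betav (.dollar (.var 0) ((q.lift 1).lift 0)) (.var 1) (.var 1)
    simp only [LTm.subst, LTm.subst_lift₁] at h4
    simpa using h4
  have rchain : Equiv (.app Om (.lam B))
      (.shift (.dollar (.lam (.dollar (.var 1) (q.lift 1))) (p.lift 0))) :=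
    (((Equiv.rel (.ax s1)).trans
      (Equiv.shiftC (Equiv.rel (.ax s2)))).trans
      (Equiv.shiftC (Equiv.rel (.ax s3)))).trans
      (Equiv.shiftC (Equiv.dolLC (Equiv.lamC (Equiv.rel (.ax s4)))))
  -- left chain
  have l1 : Equiv t (.shift (.dollar (.var 0) (E.plug (p.lift 0)))) := by
    have h1 := (Equiv.rel (.ax (LTm.Ax.etad t))).symm
    rwa [ht] at h1
  have l2 : LTm.Ax (.dollar (.var 0) (E.plug (p.lift 0)))
      (.dollar (.lam (.dollar (.var 1) (q.lift 1))) (p.lift 0)) := by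
    have h2 := LTm.Ax.dolE (.var 0) E (p.lift 0) (.var 0) hE
    rw [hq] at h2
    simpa [LTm.lift] using h2
  exact (l1.trans (Equiv.shiftC (Equiv.rel (.ax l2)))).trans rchain.symm

end Shift0

namespace Shift0

open LTm (Equiv)

theorem Om_app_lift (d : Nat) (X : LTm) :
    (LTm.app Om X).lift d = .app Om (X.lift d) := by
  simp only [Om, LTm.lift]
  rw [if_pos (by omega : (1:Nat) < d+1+1), if_pos (by omega : (0:Nat) < d+1+1)]

theorem contr_pi : ∀ {M N : Tm}, Tm.Contr M N → Equiv (pi M) (pi N)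
  | _, _, .betav M V hV => by
      rw [show pi (Tm.subst M 0 V) = (pi M).subst 0 (pi V) from pi_subst M 0 V]
      exact Equiv.rel (.ax (.betav _ _ (pi_isValue hV)))
  | _, _, .etav V hV => by
      rw [show pi (.lam (.app (V.lift 0) (.var 0)))
          = .lam (.app ((pi V).lift 0) (.var 0)) by simp only [pi, pi_lift]]
      exact Equiv.rel (.ax (.etav _ (pi_isValue hV)))
  | _, _, .dolv V hV => by
      rw [show pi (.lam (.app (.var 0) (V.lift 0)))
          = .lam (.app (.var 0) ((pi V).lift 0)) by simp only [pi, pi_lift]]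
      exact Equiv.lamC (Equiv.rel (.ax (.dolv _ _ (.var 0) ((pi_isValue hV).lift 0))))
  | _, _, .dolsh V hV => by
      rw [show pi (.freeze (.thaw V))
          = .lam (.dollar (.var 0) (.app Om ((pi V).lift 0))) by
        rw [show pi (.freeze (.thaw V))
            = .lam (.dollar (.var 0) ((LTm.app Om (pi V)).lift 0)) from rfl,
          Om_app_lift]]
      have a1 : LTm.Ax (.app Om ((pi V).lift 0))
          (.shift (.app (((pi V).lift 0).lift 0) (.var 0))) :=
        om_beta _ ((pi_isValue hV).lift 0)
      have a2 : LTm.Ax (.dollar (.var 0) (.shift (.app (((pi V).lift 0).lift 0) (.var 0))))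
          (.app ((pi V).lift 0) (.var 0)) := by
        have h := LTm.Ax.betad (.var 0) (.app (((pi V).lift 0).lift 0) (.var 0)) (.var 0)
        simp only [LTm.subst, LTm.subst_lift₁] at h
        simpa using h
      have a3 : LTm.Ax (.lam (.app ((pi V).lift 0) (.var 0))) (pi V) :=
        .etav _ (pi_isValue hV)
      exact ((Equiv.lamC (Equiv.dolRC (Equiv.rel (.ax a1)))).trans
        (Equiv.lamC (Equiv.rel (.ax a2)))).trans (Equiv.rel (.ax a3))
  | _, _, .shdol M => by
      have a1 : LTm.Ax (.app Om (.lam (.dollar (.var 0) ((pi M).lift 0))))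
          (.shift (.app ((LTm.lam (.dollar (.var 0) ((pi M).lift 0))).lift 0) (.var 0))) :=
        om_beta _ (.lam _)
      have a2 : LTm.Ax (.app ((LTm.lam (.dollar (.var 0) ((pi M).lift 0))).lift 0) (.var 0))
          (.dollar (.var 0) ((pi M).lift 0)) := by
        have h := LTm.Ax.betav ((LTm.dollar (.var 0) ((pi M).lift 0)).lift 1) (.var 0) (.var 0)
        rwa [LTm.subst_lift_var₀] at h
      exact (Equiv.rel (.ax a1)).trans ((Equiv.shiftC (Equiv.rel (.ax a2))).trans
        (Equiv.rel (.ax (.etad (pi M)))))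
  | _, _, .pure V hV => by
      rw [show pi (.thaw (.lam (.app (.var 0) (V.lift 0))))
          = .app Om (.lam (.app (.var 0) (pi (V.lift 0)))) from rfl, pi_lift]
      have a1 : LTm.Ax (.app Om (.lam (.app (.var 0) ((pi V).lift 0))))
          (.shift (.app ((LTm.lam (.app (.var 0) ((pi V).lift 0))).lift 0) (.var 0))) :=
        om_beta _ (.lam _)
      have a2 : LTm.Ax (.app ((LTm.lam (.app (.var 0) ((pi V).lift 0))).lift 0) (.var 0))
          (.app (.var 0) ((pi V).lift 0)) := by
        have h := LTm.Ax.betav ((LTm.app (.var 0) ((pi V).lift 0)).lift 1) (.var 0) (.var 0)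
        rwa [LTm.subst_lift_var₀] at h
      have a3 : Equiv (.app (.var 0) ((pi V).lift 0)) (.dollar (.var 0) ((pi V).lift 0)) :=
        (Equiv.rel (.ax (.dolv _ _ (.var 0) ((pi_isValue hV).lift 0)))).symm
      exact (Equiv.rel (.ax a1)).trans
        ((Equiv.shiftC ((Equiv.rel (.ax a2)).trans a3)).trans
          (Equiv.rel (.ax (.etad (pi V)))))
  | _, _, .bind J P hJ hP => by
      cases J with
      | appL N =>
          rw [pi_letIn]
          simp only [JCtx.lift, JCtx.plug, pi, pi_lift]
          refine bind_core (.app (pi P) (pi N)) (pi P) (.app (.var 0) ((pi N).lift 0))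
            (.appL .hole ((pi N).lift 0)) trivial ?_ ?_
          · simp only [ECtx.lift, ECtx.plug, LTm.lift]
            rw [if_pos (Nat.succ_pos 0), LTm.lift_lift (pi N) 0 0 (Nat.le_refl 0)]
          · simp only [ECtx.plug, LTm.lift]
      | appR V =>
          rw [pi_letIn]
          simp only [JCtx.lift, JCtx.plug, pi, pi_lift]
          refine bind_core (.app (pi V) (pi P)) (pi P) (.app ((pi V).lift 0) (.var 0))
            (.appR ((pi V).lift 0) .hole) ⟨(pi_isValue hJ).lift 0, trivial⟩ ?_ ?_
          · simp only [ECtx.lift, ECtx.plug, LTm.lift]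
            rw [if_pos (Nat.succ_pos 0), LTm.lift_lift (pi V) 0 0 (Nat.le_refl 0)]
          · simp only [ECtx.plug, LTm.lift]
      | thaw =>
          rw [pi_letIn]
          simp only [JCtx.lift, JCtx.plug, pi_thaw]
          refine bind_core (.app Om (pi P)) (pi P) (.app Om (.var 0))
            (.appR Om .hole) ⟨Om_isValue, trivial⟩ rfl rfl

theorem step_pi : ∀ {M N : Tm}, Tm.Step M N → Equiv (pi M) (pi N)
  | _, _, .contr h => contr_pi h
  | _, _, .lam h => Equiv.lamC (step_pi h)
  | _, _, .freeze h => Equiv.lamC (Equiv.dolRC ((step_pi h).liftE 0))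
  | _, _, .appL h => Equiv.appLC (step_pi h)
  | _, _, .appR h => Equiv.appRC (step_pi h)
  | _, _, .thaw h => Equiv.appRC (step_pi h)

theorem pi_iota : ∀ (e : LTm), Equiv (pi (iota e)) e
  | .var n => LTm.Equiv.refl _
  | .lam e => Equiv.lamC (pi_iota e)
  | .app e f => Equiv.appC (pi_iota e) (pi_iota f)
  | .shift e => by
      have a1 : LTm.Ax (.app Om (.lam (pi (iota e))))
          (.shift (.app ((LTm.lam (pi (iota e))).lift 0) (.var 0))) :=
        om_beta _ (.lam _)
      have a2 : LTm.Ax (.app ((LTm.lam (pi (iota e))).lift 0) (.var 0)) (pi (iota e)) := by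
        have h := LTm.Ax.betav ((pi (iota e)).lift 1) (.var 0) (.var 0)
        rwa [LTm.subst_lift_var₀] at h
      exact ((Equiv.rel (.ax a1)).trans (Equiv.shiftC (Equiv.rel (.ax a2)))).trans
        (Equiv.shiftC (pi_iota e))
  | .dollar e f =>
      (dollar_pi (pi (iota f)) (pi (iota e))).trans
        (Equiv.dollarC (pi_iota e) (pi_iota f))

theorem equiv_pi {M M' : Tm} (h : Tm.Equiv M M') : LTm.Equiv (pi M) (pi M') := by
  induction h with
  | rel a b hab => exact step_pi hab
  | refl a => exact LTm.Equiv.refl _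
  | symm a b _ ih => exact ih.symm
  | trans a b c _ _ ih1 ih2 => exact ih1.trans ih2

end Shift0

namespace Shift0

/-- **Completeness of ι.**  If `ι(e) =Λ$ ι(e')` then `e =λ$ e'`; and if
`M =Λ$ M'` then `π(M) =λ$ π(M')`. -/
theorem iota_complete :
    (∀ e e' : LTm, Tm.Equiv (iota e) (iota e') → LTm.Equiv e e') ∧
    (∀ M M' : Tm, Tm.Equiv M M' → LTm.Equiv (pi M) (pi M')) := by
  refine ⟨fun e e' h => ?_, fun M M' h => equiv_pi h⟩
  exact ((pi_iota e).symm.trans (equiv_pi h)).trans (pi_iota e')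

end Shift0
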